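/- Herbrand's Theorem: Let L be a first-order language possessing at least one closed term, and let χ be a quantifier-free formula of L with free variables among x₁, …, xₙ. Then the purely existential sentence ∃x₁ … ∃xₙ χ(x₁, …, xₙ) is valid (true in every nonempty L-structure) if and only if there exist m ≥ 1 and closed terms t₁ⁱ, …, tₙⁱ for i = 1, …, m such that the sentence ⋁_{i=1}^m χ(t₁ⁱ, …, tₙⁱ) is valid. -/

import Mathlib

/-!
If no finite disjunction of closed instances of `χ` is valid, compactness yields a structure `N`
in which every closed instance `χ(t)` fails. The values in `N` of the closed terms built from
`t₀` with the finitely many function symbols of `χ` form a countable set closed under those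
symbols; interpreting all other symbols arbitrarily makes it a structure on which the
quantifier-free `χ` is evaluated exactly as in `N`, so `∃ x, χ(x)` fails there. Being countable,
this structure can be moved to any universe.
-/

universe u v w

open FirstOrder

namespace FirstOrder.Language

open Structure

variable {L : Language.{u, v}} {α : Type*} {M N : Type*} [L.Structure M] [L.Structure N]

def Term.functionSymbols : L.Term α → Set (Σ k, L.Functions k)
  | var _ => ∅
  | func f ts => insert ⟨_, f⟩ (⋃ i, (ts i).functionSymbols)

def BoundedFormula.functionSymbols : ∀ {n}, L.BoundedFormula α n → Set (Σ k, L.Functions k)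
  | _, falsum => ∅
  | _, equal t₁ t₂ => t₁.functionSymbols ∪ t₂.functionSymbols
  | _, rel _ ts => ⋃ i, (ts i).functionSymbols
  | _, imp φ ψ => φ.functionSymbols ∪ ψ.functionSymbols
  | _, all φ => φ.functionSymbols

theorem Term.finite_functionSymbols (t : L.Term α) : t.functionSymbols.Finite := by
  induction t with
  | var => exact Set.finite_empty
  | func f ts ih => exact (Set.finite_iUnion ih).insert _

theorem BoundedFormula.finite_functionSymbols {n : ℕ} (φ : L.BoundedFormula α n) :
    φ.functionSymbols.Finite := by
  induction φ with
  | falsum => exact Set.finite_empty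
  | equal t₁ t₂ => exact t₁.finite_functionSymbols.union t₂.finite_functionSymbols
  | rel R ts => exact Set.finite_iUnion fun i => (ts i).finite_functionSymbols
  | imp φ ψ ihφ ihψ => exact ihφ.union ihψ
  | all φ ih => exact ih

section Transfer

variable {S : Set (Σ k, L.Functions k)} {h : M → N}
  (hfun : ∀ {k} (f : L.Functions k), ⟨k, f⟩ ∈ S → ∀ x : Fin k → M,
    h (funMap f x) = funMap f (h ∘ x))
include hfun

theorem Term.realize_comp_of_functionSymbols_subset {t : L.Term α}
    (ht : t.functionSymbols ⊆ S) (v : α → M) : t.realize (h ∘ v) = h (t.realize v) := by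
  induction t with
  | var => rfl
  | func f ts ih =>
    simp only [functionSymbols, Set.insert_subset_iff, Set.iUnion_subset_iff] at ht
    simp only [realize_func, hfun f ht.1]
    exact congrArg _ (funext fun i => ih i (ht.2 i))

theorem BoundedFormula.IsQF.realize_comp_of_functionSymbols_subset (hinj : Function.Injective h)
    (hrel : ∀ {k} (R : L.Relations k) (x : Fin k → M), RelMap R (h ∘ x) ↔ RelMap R x)
    {n : ℕ} {φ : L.BoundedFormula α n} (hφ : φ.IsQF) (hS : φ.functionSymbols ⊆ S)
    {v : α → M} {xs : Fin n → M} :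
    φ.Realize (h ∘ v) (h ∘ xs) ↔ φ.Realize v xs := by
  have hterm : ∀ t : L.Term (α ⊕ Fin n), t.functionSymbols ⊆ S →
      t.realize (Sum.elim (h ∘ v) (h ∘ xs)) = h (t.realize (Sum.elim v xs)) := fun t ht => by
    rw [← Sum.comp_elim, Term.realize_comp_of_functionSymbols_subset hfun ht]
  induction hφ with
  | falsum => rfl
  | of_isAtomic hA =>
    cases hA with
    | equal t₁ t₂ =>
      simp only [Term.bdEqual, functionSymbols, Set.union_subset_iff] at hS
      simp only [realize_bdEqual, hterm t₁ hS.1, hterm t₂ hS.2, hinj.eq_iff]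
    | rel R ts =>
      simp only [Relations.boundedFormula, functionSymbols, Set.iUnion_subset_iff] at hS
      simp only [realize_rel, fun i => hterm (ts i) (hS i)]
      exact hrel R _
  | imp _ _ ihφ ihψ =>
    simp only [functionSymbols, Set.union_subset_iff] at hS
    simp only [realize_imp, ihφ hS.1, ihψ hS.2]

end Transfer

def restrictFunctions (L : Language.{u, v}) (S : Set (Σ k, L.Functions k)) : Language.{u, 0} :=
  ⟨fun k => {f : L.Functions k // ⟨k, f⟩ ∈ S}, fun _ => Empty⟩

def LHom.restrictFunctionsIncl (S : Set (Σ k, L.Functions k)) :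
    L.restrictFunctions S →ᴸ L where
  onFunction _ f := f.1
  onRelation _ R := R.elim

instance (S : Set (Σ k, L.Functions k)) [Countable S] :
    Countable (Σ k, (L.restrictFunctions S).Functions k) := by
  refine Function.Injective.countable (f := fun f => (⟨⟨f.1, f.2.1⟩, f.2.2⟩ : S)) ?_
  rintro ⟨k, f, hf⟩ ⟨k', f', hf'⟩ h
  cases congrArg Subtype.val h
  rfl

section ClosedTermValues

variable (S : Set (Σ k, L.Functions k)) (t₀ : L.Term Empty)

def closedTermValues : Set N :=
  Set.range fun t : (L.restrictFunctions S).Term Unit =>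
    (((LHom.restrictFunctionsIncl S).onTerm t).subst fun _ => t₀).realize default

variable {S t₀}

theorem countable_closedTermValues [Countable S] : (closedTermValues S t₀ : Set N).Countable :=
  Set.countable_range _

theorem realize_mem_closedTermValues : t₀.realize default ∈ (closedTermValues S t₀ : Set N) :=
  ⟨var (), rfl⟩

theorem funMap_mem_closedTermValues {k : ℕ} {f : L.Functions k} (hf : ⟨k, f⟩ ∈ S)
    {x : Fin k → N} (hx : ∀ i, x i ∈ (closedTermValues S t₀ : Set N)) :
    funMap f x ∈ (closedTermValues S t₀ : Set N) := by
  choose ts hts using hx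
  refine ⟨func ⟨f, hf⟩ ts, ?_⟩
  rw [← funext hts]
  rfl

open Classical in
noncomputable instance : L.Structure (closedTermValues S t₀ : Set N) where
  funMap {k} f x :=
    if hf : ⟨k, f⟩ ∈ S then
      ⟨funMap f (Subtype.val ∘ x), funMap_mem_closedTermValues hf fun i => (x i).2⟩
    else ⟨t₀.realize default, realize_mem_closedTermValues⟩
  RelMap R x := RelMap R (Subtype.val ∘ x)

theorem realize_subtypeVal_closedTermValues {φ : L.Formula α} (hφ : φ.IsQF)
    (hS : φ.functionSymbols ⊆ S) {v : α → (closedTermValues S t₀ : Set N)} :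
    φ.Realize (Subtype.val ∘ v) ↔ φ.Realize v := by
  have h := hφ.realize_comp_of_functionSymbols_subset (h := Subtype.val)
    (fun f hf x => by simp [funMap, dif_pos hf]) Subtype.val_injective (fun _ _ => Iff.rfl) hS
    (v := v) (xs := default)
  rwa [Unique.eq_default (Subtype.val ∘ default)] at h

end ClosedTermValues

theorem exists_model_forall_not_realize (t₀ : L.Term Empty) {n : ℕ} {χ : L.Formula (Fin n)}
    (hqf : χ.IsQF) (N : Type*) [L.Structure N]
    (hN : ∀ s : Fin n → L.Term Empty, ¬ N ⊨ χ.subst s) :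
    ∃ (M : Type w) (_ : L.Structure M), Nonempty M ∧ ∀ x : Fin n → M, ¬ χ.Realize x := by
  let C : Set N := closedTermValues χ.functionSymbols t₀
  have : Countable χ.functionSymbols := χ.finite_functionSymbols.countable.to_subtype
  have : Countable C := countable_closedTermValues.to_subtype
  let e : C ≃ Shrink.{w} C := equivShrink.{w} C
  let _ : L.Structure (Shrink.{w} C) := e.inducedStructure
  refine ⟨Shrink C, inferInstance, ⟨e ⟨_, realize_mem_closedTermValues⟩⟩, fun x hx => ?_⟩
  have hxN : χ.Realize (Subtype.val ∘ e.symm ∘ x) := by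
    rwa [realize_subtypeVal_closedTermValues hqf subset_rfl,
      ← StrongHomClass.realize_formula (Equiv.inducedStructureEquiv e),
      Equiv.toFun_inducedStructureEquiv, ← Function.comp_assoc, e.self_comp_symm]
  choose s hs using fun j => (e.symm (x j)).2
  refine hN (fun j => ((LHom.restrictFunctionsIncl _).onTerm (s j)).subst fun _ => t₀) ?_
  simpa [Sentence.Realize, Formula.Realize, BoundedFormula.realize_subst, hs, Function.comp_def]
    using hxN

theorem exists_valid_iSup_of_not_isSatisfiable {β : Type*} [Nonempty β] {ψ : β → L.Sentence}
    (h : ¬ Theory.IsSatisfiable (Set.range fun b => (ψ b).not)) :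
    ∃ m : ℕ, 0 < m ∧ ∃ t : Fin m → β, ∀ (M : Type w) (_ : L.Structure M), Nonempty M →
      M ⊨ BoundedFormula.iSup fun i => ψ (t i) := by
  classical
  rw [Theory.isSatisfiable_iff_isFinitelySatisfiable, Theory.IsFinitelySatisfiable] at h
  push Not at h
  obtain ⟨T₀, hT₀, hunsat⟩ := h
  obtain ⟨F, -, rfl⟩ := Finset.subset_set_image_iff.1 (Set.image_univ ▸ hT₀)
  obtain ⟨m, t, ht⟩ := ((F : Set β).toFinite.insert (Classical.arbitrary β)).fin_embedding
  obtain ⟨i₀, -⟩ : Classical.arbitrary β ∈ Set.range t := ht ▸ Set.mem_insert _ _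
  refine ⟨m, i₀.pos, t, fun M _ _ => ?_⟩
  by_contra hM
  refine hunsat (@Theory.Model.isSatisfiable _ _ M _ _ ⟨fun φ hφ => ?_⟩)
  simp only [Finset.coe_image, Set.mem_image, Finset.mem_coe] at hφ
  obtain ⟨b, hb, rfl⟩ := hφ
  obtain ⟨i, rfl⟩ : b ∈ Set.range t := ht ▸ Set.mem_insert_of_mem _ hb
  simp only [Sentence.Realize, Formula.Realize, BoundedFormula.realize_iSup, not_exists] at hM
  exact (Sentence.realize_not M).2 (hM i)

theorem realize_exs_relabel_sumInr {n : ℕ} (χ : L.Formula (Fin n)) :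
    M ⊨ (BoundedFormula.relabel (Sum.inr : Fin n → Empty ⊕ Fin n) χ).exs ↔
      ∃ x : Fin n → M, χ.Realize x := by
  rw [Sentence.Realize, BoundedFormula.realize_exs]
  exact exists_congr fun x => Formula.realize_relabel_sumInr χ

end FirstOrder.Language

/-- **Herbrand's Theorem.** In a language with at least one closed term, a purely
existential sentence `∃ x₁ … ∃ xₙ χ(x₁, …, xₙ)` (with `χ` quantifier-free) is valid
(true in every nonempty structure) iff there exist `m ≥ 1` and closed terms
`tⱼⁱ` (`i = 1, …, m`) such that the disjunction `⋁ᵢ χ(t₁ⁱ, …, tₙⁱ)` is valid. -/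
theorem herbrand {L : FirstOrder.Language.{u, v}} (t₀ : L.Term Empty) (n : ℕ)
    (χ : L.Formula (Fin n)) (hqf : χ.IsQF) :
    (∀ (M : Type w) (_ : L.Structure M), Nonempty M →
        Language.Sentence.Realize M
          (Language.BoundedFormula.exs
            (Language.BoundedFormula.relabel (Sum.inr : Fin n → Empty ⊕ Fin n) χ))) ↔
    (∃ m : ℕ, 0 < m ∧ ∃ t : Fin m → Fin n → L.Term Empty,
      ∀ (M : Type w) (_ : L.Structure M), Nonempty M →
        Language.Sentence.Realize M
          (Language.BoundedFormula.iSup (fun i : Fin m => χ.subst (t i)))) := by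
  constructor
  · intro hvalid
    have : Nonempty (Fin n → L.Term Empty) := ⟨fun _ => t₀⟩
    refine Language.exists_valid_iSup_of_not_isSatisfiable fun ⟨N⟩ => ?_
    have hN (s : Fin n → L.Term Empty) : ¬ N ⊨ χ.subst s :=
      (Language.Sentence.realize_not N).1 (Language.Theory.realize_sentence_of_mem _
        (Set.mem_range_self (f := fun s => (χ.subst s).not) s))
    obtain ⟨M, _, hM, hχ⟩ := Language.exists_model_forall_not_realize.{u, v, w} t₀ hqf N hN
    obtain ⟨x, hx⟩ := (Language.realize_exs_relabel_sumInr χ).1 (hvalid M _ hM)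
    exact hχ x hx
  · rintro ⟨m, -, t, hvalid⟩ M _ hM
    obtain ⟨i, hi⟩ := Language.BoundedFormula.realize_iSup.1 (hvalid M _ hM)
    exact (Language.realize_exs_relabel_sumInr χ).2
      ⟨_, Language.BoundedFormula.realize_subst.1 hi⟩
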